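/- arXiv:2603.17942 — 4 statements merged into one kernel-verified Lean document; each statement's English description precedes it below -/
import Mathlib

section
/- Let h_m, h_v ∈ ℝ^d and w_i, w_j ∈ ℝ^d with ‖w_i‖, ‖w_j‖ ≤ c_w, ‖h_m‖, ‖h_v‖ ≤ c_h, and ⟨h_m, h_v⟩ ≥ c_h² δ. Define Δ^v = ⟨w_i, h_v⟩ − ⟨w_j, h_v⟩ and Δ^m = ⟨w_i, h_m⟩ − ⟨w_j, h_m⟩. Then Δ^m ≥ Δ^v − 2√2 · c_w · c_h · √(1 − δ). -/
open scoped RealInnerProductSpace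

theorem stmt_2 (d : ℕ) (h_m h_v w_i w_j : EuclideanSpace ℝ (Fin d)) (c_w c_h δ : ℝ)
    (hwi : ‖w_i‖ ≤ c_w) (hwj : ‖w_j‖ ≤ c_w)
    (hm : ‖h_m‖ ≤ c_h) (hv : ‖h_v‖ ≤ c_h)
    (hδ0 : 0 ≤ δ) (hδ1 : δ ≤ 1)
    (hcos : ⟪h_m, h_v⟫ ≥ c_h ^ 2 * δ) :
    ⟪w_i, h_m⟫ - ⟪w_j, h_m⟫ ≥
      (⟪w_i, h_v⟫ - ⟪w_j, h_v⟫) - 2 * (Real.sqrt 2 * c_w * c_h) * Real.sqrt (1 - δ) := by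
  have hcw : 0 ≤ c_w := le_trans (norm_nonneg _) hwi
  have hch : 0 ≤ c_h := le_trans (norm_nonneg _) hm
  have hw : ‖w_i - w_j‖ ≤ 2 * c_w := by
    calc ‖w_i - w_j‖ ≤ ‖w_i‖ + ‖w_j‖ := norm_sub_le _ _
      _ ≤ 2 * c_w := by linarith
  have hsq : ‖h_v - h_m‖ ^ 2 ≤ 2 * c_h ^ 2 * (1 - δ) := by
    have := @norm_sub_sq_real (EuclideanSpace ℝ (Fin d)) _ _ h_v h_m
    have hcomm : ⟪h_v, h_m⟫ = ⟪h_m, h_v⟫ := real_inner_comm _ _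
    have h1 : ‖h_v‖ ^ 2 ≤ c_h ^ 2 := by
      have := norm_nonneg h_v; nlinarith
    have h2 : ‖h_m‖ ^ 2 ≤ c_h ^ 2 := by
      have := norm_nonneg h_m; nlinarith
    nlinarith
  have hhn : ‖h_v - h_m‖ ≤ Real.sqrt 2 * c_h * Real.sqrt (1 - δ) := by
    have hb : (Real.sqrt 2 * c_h * Real.sqrt (1 - δ)) ^ 2 = 2 * c_h ^ 2 * (1 - δ) := by
      have h2 : Real.sqrt 2 ^ 2 = 2 := Real.sq_sqrt (by norm_num)
      have h3 : Real.sqrt (1 - δ) ^ 2 = 1 - δ := Real.sq_sqrt (by linarith)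
      rw [mul_pow, mul_pow, h2, h3]
    have hnn : 0 ≤ Real.sqrt 2 * c_h * Real.sqrt (1 - δ) :=
      mul_nonneg (mul_nonneg (Real.sqrt_nonneg _) hch) (Real.sqrt_nonneg _)
    nlinarith [norm_nonneg (h_v - h_m), hsq]
  have hinner : ⟪w_i - w_j, h_v - h_m⟫ ≤ ‖w_i - w_j‖ * ‖h_v - h_m‖ :=
    real_inner_le_norm _ _
  have hexp : ⟪w_i - w_j, h_v - h_m⟫
      = ⟪w_i, h_v⟫ - ⟪w_i, h_m⟫ - ⟪w_j, h_v⟫ + ⟪w_j, h_m⟫ := by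
    simp [inner_sub_left, inner_sub_right]; ring
  have hprod : ‖w_i - w_j‖ * ‖h_v - h_m‖
      ≤ (2 * c_w) * (Real.sqrt 2 * c_h * Real.sqrt (1 - δ)) :=
    mul_le_mul hw hhn (norm_nonneg _) (by linarith)
  nlinarith [hinner, hexp, hprod]
end

section
/- Let h_m, h_v ∈ ℝ^d and w_i, w_j ∈ ℝ^d satisfy ‖w_i‖, ‖w_j‖ ≤ c_w, ‖h_m‖, ‖h_v‖ ≤ c_h, and ⟨h_m, h_v⟩ ≥ c_h² δ, with c = √2 · c_w · c_h > 0. If Δ^v := ⟨w_i, h_v⟩ − ⟨w_j, h_v⟩ > 0 and δ > 1 − (Δ^v / (2c))², then ⟨w_i, h_m⟩ − ⟨w_j, h_m⟩ > 0. -/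
open scoped RealInnerProductSpace

theorem stmt_3 (d : ℕ) (h_m h_v w_i w_j : EuclideanSpace ℝ (Fin d)) (c_w c_h δ c : ℝ)
    (hwi : ‖w_i‖ ≤ c_w) (hwj : ‖w_j‖ ≤ c_w)
    (hm : ‖h_m‖ ≤ c_h) (hv : ‖h_v‖ ≤ c_h)
    (hc : c = Real.sqrt 2 * c_w * c_h) (hcpos : 0 < c)
    (hcos : ⟪h_m, h_v⟫ ≥ c_h ^ 2 * δ)
    (hΔ : ⟪w_i, h_v⟫ - ⟪w_j, h_v⟫ > 0)
    (hδ : δ > 1 - ((⟪w_i, h_v⟫ - ⟪w_j, h_v⟫) / (2 * c)) ^ 2) :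
    ⟪w_i, h_m⟫ - ⟪w_j, h_m⟫ > 0 := by
  set Δv : ℝ := ⟪w_i, h_v⟫ - ⟪w_j, h_v⟫ with hΔv
  have hcw0 : (0:ℝ) ≤ c_w := le_trans (norm_nonneg _) hwi
  have hch0 : (0:ℝ) ≤ c_h := le_trans (norm_nonneg _) hm
  -- ‖h_m - h_v‖ ≤ √2 * c_h * √(1-δ)
  have hsq : ‖h_m - h_v‖ ^ 2 ≤ 2 * c_h ^ 2 * (1 - δ) := by
    have h1 : ‖h_m - h_v‖ ^ 2 = ‖h_m‖ ^ 2 - 2 * ⟪h_m, h_v⟫ + ‖h_v‖ ^ 2 := by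
      rw [@norm_sub_sq_real]
    have h2 : ‖h_m‖ ^ 2 ≤ c_h ^ 2 := by
      have := sq_le_sq' (by linarith [norm_nonneg h_m]) hm; simpa using this
    have h3 : ‖h_v‖ ^ 2 ≤ c_h ^ 2 := by
      have := sq_le_sq' (by linarith [norm_nonneg h_v]) hv; simpa using this
    nlinarith
  have hnorm : ‖h_m - h_v‖ ≤ Real.sqrt (2 * c_h ^ 2 * (1 - δ)) := by
    have := Real.sqrt_le_sqrt hsq
    rwa [Real.sqrt_sq (norm_nonneg _)] at this
  have hsqrt_eq : Real.sqrt (2 * c_h ^ 2 * (1 - δ)) = Real.sqrt 2 * c_h * Real.sqrt (1 - δ) := by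
    rw [show (2:ℝ) * c_h ^ 2 * (1 - δ) = 2 * (c_h^2 * (1 - δ)) by ring,
      Real.sqrt_mul (by norm_num), Real.sqrt_mul (sq_nonneg _), Real.sqrt_sq hch0, mul_assoc]
  have hwij : ‖w_i - w_j‖ ≤ 2 * c_w := by
    calc ‖w_i - w_j‖ ≤ ‖w_i‖ + ‖w_j‖ := norm_sub_le _ _
    _ ≤ 2 * c_w := by linarith
  have hinner : |⟪w_i - w_j, h_m - h_v⟫| ≤ 2 * c * Real.sqrt (1 - δ) := by
    calc |⟪w_i - w_j, h_m - h_v⟫| ≤ ‖w_i - w_j‖ * ‖h_m - h_v‖ := abs_real_inner_le_norm _ _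
    _ ≤ (2 * c_w) * (Real.sqrt 2 * c_h * Real.sqrt (1 - δ)) := by
        rw [← hsqrt_eq]
        exact mul_le_mul hwij hnorm (norm_nonneg _) (by linarith)
    _ = 2 * c * Real.sqrt (1 - δ) := by rw [hc]; ring
  have hlt : 2 * c * Real.sqrt (1 - δ) < Δv := by
    rcases le_or_gt (1 - δ) 0 with h | h
    · rw [Real.sqrt_eq_zero_of_nonpos h]; simpa using hΔ
    · have hy : 0 < Δv / (2 * c) := div_pos hΔ (by linarith)
      have : Real.sqrt (1 - δ) < Δv / (2 * c) := by
        rw [Real.sqrt_lt' hy]; linarith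
      calc 2 * c * Real.sqrt (1 - δ) < 2 * c * (Δv / (2 * c)) := by
            exact mul_lt_mul_of_pos_left this (by linarith)
      _ = Δv := by field_simp
  have hexp : ⟪w_i, h_m⟫ - ⟪w_j, h_m⟫ = Δv + ⟪w_i - w_j, h_m - h_v⟫ := by
    simp only [hΔv, inner_sub_left, inner_sub_right]; ring
  rw [hexp]
  have := abs_le.mp hinner
  linarith [this.1]
end

section
/- Let V, K ∈ ℕ with 1 ≤ K ≤ V, let h_m, h_v ∈ ℝ^d with ‖h_m‖, ‖h_v‖ ≤ c_h, and let w_1, …, w_V ∈ ℝ^d with ‖w_r‖ ≤ c_w for all r. Set c = √2 c_w c_h and let i* = argmax_r ⟨w_r, h_v⟩ (assumed unique). Let S_v be a set of K indices containing the K largest values of r ↦ ⟨w_r, h_v⟩, and let K* ∈ S_v be an index attaining the K-th largest value, with Δ := ⟨w_{i*}, h_v⟩ − ⟨w_{K*}, h_v⟩. If ⟨h_m, h_v⟩ ≥ c_h² δ and δ > 1 − (Δ/(2c))², then for every index j ∉ S_v we have ⟨w_{i*}, h_m⟩ ≥ ⟨w_j, h_m⟩; consequently at most K − 1 indices j satisfy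 ⟨w_j, h_m⟩ > ⟨w_{i*}, h_m⟩, so i* lies in every top-K set of the mask-token logits r ↦ ⟨w_r, h_m⟩. -/
/-!
Write `e = ‖h_m - h_v‖`. The alignment hypothesis gives `e² ≤ 2 c_h² (1 - δ)`, and the
hypothesis on `δ` turns this into `2 c_w e < Δ`. For `j ∉ S_v`, moving from `h_v` to `h_m`
changes the logit gap `⟨w_{i*} - w_j, ·⟩` by at most `‖w_{i*} - w_j‖ e ≤ 2 c_w e`, while at
`h_v` the gap is at least `Δ`; so `i*` still strictly beats every `j ∉ S_v`. (When `c = 0` the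
division by `c` is junk, `δ > 1` and `e = 0`, so strictness comes from uniqueness of `i*`.)
As `|S_v| = K`, a top-`K` set other than `S_v` contains some `j ∉ S_v`, so it cannot omit `i*`.
-/

open scoped RealInnerProductSpace

theorem eq_zero_or_two_mul_lt_of_sq_le {cw ch δ Δ e : ℝ} (hΔ : 0 ≤ Δ)
    (he2 : e ^ 2 ≤ 2 * ch ^ 2 * (1 - δ)) (hδ : δ > 1 - (Δ / (2 * (√2 * cw * ch))) ^ 2) :
    e = 0 ∨ 2 * cw * e < Δ := by
  by_cases hc : √2 * cw * ch = 0
  · left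
    rw [hc, mul_zero, div_zero] at hδ
    nlinarith [sq_nonneg ch, sq_nonneg e]
  · right
    have hc2 : (2 * (√2 * cw * ch)) ^ 2 = 8 * (cw * ch) ^ 2 := by
      rw [mul_pow, mul_assoc, mul_pow, Real.sq_sqrt zero_le_two]; ring
    have hpos : 0 < 8 * (cw * ch) ^ 2 := by
      rw [← hc2]; positivity
    rw [div_pow, hc2] at hδ
    have hsq : (2 * cw * e) ^ 2 < Δ ^ 2 := by
      have : 8 * (cw * ch) ^ 2 * (1 - δ) < Δ ^ 2 := by
        rw [mul_comm, ← lt_div_iff₀ hpos]; linarith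
      nlinarith [sq_nonneg cw]
    exact lt_of_abs_lt (abs_lt_of_sq_lt_sq hsq hΔ)

section Margin

variable {E : Type*} [NormedAddCommGroup E] [InnerProductSpace ℝ E]

theorem real_inner_sub_norm_mul_le (u x y : E) : ⟪u, y⟫ - ‖u‖ * ‖x - y‖ ≤ ⟪u, x⟫ := by
  have h : -(‖u‖ * ‖x - y‖) ≤ ⟪u, x - y⟫ := neg_le_of_abs_le (abs_real_inner_le_norm u _)
  rw [inner_sub_right] at h
  linarith

theorem norm_sub_sq_le_of_real_inner_ge {x y : E} {r δ : ℝ} (hx : ‖x‖ ≤ r) (hy : ‖y‖ ≤ r)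
    (hxy : r ^ 2 * δ ≤ ⟪x, y⟫) : ‖x - y‖ ^ 2 ≤ 2 * r ^ 2 * (1 - δ) := by
  have hx2 : ‖x‖ ^ 2 ≤ r ^ 2 := pow_le_pow_left₀ (norm_nonneg x) hx 2
  have hy2 : ‖y‖ ^ 2 ≤ r ^ 2 := pow_le_pow_left₀ (norm_nonneg y) hy 2
  rw [norm_sub_sq_real]
  linarith

theorem real_inner_lt_of_margin {a b x y : E} {cw ch δ Δ : ℝ} (ha : ‖a‖ ≤ cw) (hb : ‖b‖ ≤ cw)
    (hx : ‖x‖ ≤ ch) (hy : ‖y‖ ≤ ch) (hxy : ch ^ 2 * δ ≤ ⟪x, y⟫) (hlt : ⟪b, y⟫ < ⟪a, y⟫)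
    (hΔ : 0 ≤ Δ) (hmargin : Δ ≤ ⟪a, y⟫ - ⟪b, y⟫)
    (hδ : δ > 1 - (Δ / (2 * (√2 * cw * ch))) ^ 2) : ⟪b, x⟫ < ⟪a, x⟫ := by
  rw [← sub_pos, ← inner_sub_left]
  rcases eq_zero_or_two_mul_lt_of_sq_le hΔ (norm_sub_sq_le_of_real_inner_ge hx hy hxy) hδ
    with hsame | hclose
  · rwa [sub_eq_zero.1 (norm_eq_zero.1 hsame), inner_sub_left, sub_pos]
  · have hab : ‖a - b‖ * ‖x - y‖ ≤ 2 * cw * ‖x - y‖ :=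
      mul_le_mul_of_nonneg_right ((norm_sub_le a b).trans (by linarith)) (norm_nonneg _)
    have := real_inner_sub_norm_mul_le (a - b) x y
    rw [inner_sub_left] at this
    linarith

end Margin

section TopSet

variable {ι α : Type*} [LinearOrder α] {g : ι → α} {S : Finset ι} {i : ι}

theorem card_filter_lt_le_card_sub_one [Fintype ι] [DecidableEq ι] (hi : i ∈ S)
    (hS : ∀ j ∉ S, g j ≤ g i) :
    (Finset.univ.filter fun j => g i < g j).card ≤ S.card - 1 := by
  rw [← Finset.card_erase_of_mem hi]
  refine Finset.card_le_card fun j hj => ?_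
  have hlt : g i < g j := (Finset.mem_filter.1 hj).2
  exact Finset.mem_erase.2 ⟨fun h => hlt.ne (congrArg g h).symm,
    by_contra fun hjS => (hS j hjS).not_gt hlt⟩

theorem mem_of_card_eq_of_forall_le {T : Finset ι} (hcard : T.card = S.card)
    (hT : ∀ t ∈ T, ∀ j ∉ T, g j ≤ g t) (hi : i ∈ S) (hS : ∀ j ∉ S, g j < g i) : i ∈ T := by
  by_contra hiT
  obtain ⟨t, htT, htS⟩ : ∃ t ∈ T, t ∉ S := by
    by_contra! hTS
    exact hiT (Finset.eq_of_subset_of_card_le hTS hcard.ge ▸ hi)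
  exact (hS t htS).not_ge (hT t htT i hiT)

end TopSet

theorem stmt_4_general (d V K : ℕ)
    (h_m h_v : EuclideanSpace ℝ (Fin d)) (w : Fin V → EuclideanSpace ℝ (Fin d))
    (c_h c_w δ c Δ : ℝ)
    (hm : ‖h_m‖ ≤ c_h) (hv : ‖h_v‖ ≤ c_h) (hw : ∀ r, ‖w r‖ ≤ c_w)
    (hc : c = Real.sqrt 2 * c_w * c_h)
    (istar : Fin V) (hargmax : ∀ r, r ≠ istar → ⟪w r, h_v⟫ < ⟪w istar, h_v⟫)
    (Sv : Finset (Fin V)) (hScard : Sv.card = K)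
    (hStop : ∀ s ∈ Sv, ∀ j ∉ Sv, ⟪w j, h_v⟫ ≤ ⟪w s, h_v⟫)
    (histar : istar ∈ Sv)
    (Kstar : Fin V) (hKstar : Kstar ∈ Sv)
    (hKmin : ∀ s ∈ Sv, ⟪w Kstar, h_v⟫ ≤ ⟪w s, h_v⟫)
    (hΔ : Δ = ⟪w istar, h_v⟫ - ⟪w Kstar, h_v⟫)
    (hcos : ⟪h_m, h_v⟫ ≥ c_h ^ 2 * δ)
    (hδ : δ > 1 - (Δ / (2 * c)) ^ 2) :
    (∀ j ∉ Sv, ⟪w j, h_m⟫ ≤ ⟪w istar, h_m⟫) ∧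
    (Finset.univ.filter fun j => ⟪w istar, h_m⟫ < ⟪w j, h_m⟫).card ≤ K - 1 ∧
    (∀ T : Finset (Fin V), T.card = K →
      (∀ t ∈ T, ∀ j ∉ T, ⟪w j, h_m⟫ ≤ ⟪w t, h_m⟫) → istar ∈ T) := by
  subst hc hΔ hScard
  have hΔ0 : 0 ≤ ⟪w istar, h_v⟫ - ⟪w Kstar, h_v⟫ := sub_nonneg.2 (hKmin istar histar)
  have hbeats : ∀ j ∉ Sv, ⟪w j, h_m⟫ < ⟪w istar, h_m⟫ := fun j hj =>
    real_inner_lt_of_margin (hw istar) (hw j) hm hv hcos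
      (hargmax j (ne_of_mem_of_not_mem histar hj).symm) hΔ0
      (sub_le_sub_left (hStop Kstar hKstar j hj) _) hδ
  exact ⟨fun j hj => (hbeats j hj).le,
    card_filter_lt_le_card_sub_one histar fun j hj => (hbeats j hj).le,
    fun T hT hTtop => mem_of_card_eq_of_forall_le hT hTtop histar hbeats⟩

theorem stmt_4 (d V K : ℕ) (hK1 : 1 ≤ K) (hKV : K ≤ V)
    (h_m h_v : EuclideanSpace ℝ (Fin d)) (w : Fin V → EuclideanSpace ℝ (Fin d))
    (c_h c_w δ c Δ : ℝ)
    (hm : ‖h_m‖ ≤ c_h) (hv : ‖h_v‖ ≤ c_h) (hw : ∀ r, ‖w r‖ ≤ c_w)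
    (hc : c = Real.sqrt 2 * c_w * c_h)
    (istar : Fin V) (hargmax : ∀ r, r ≠ istar → ⟪w r, h_v⟫ < ⟪w istar, h_v⟫)
    (Sv : Finset (Fin V)) (hScard : Sv.card = K)
    (hStop : ∀ s ∈ Sv, ∀ j ∉ Sv, ⟪w j, h_v⟫ ≤ ⟪w s, h_v⟫)
    (histar : istar ∈ Sv)
    (Kstar : Fin V) (hKstar : Kstar ∈ Sv)
    (hKmin : ∀ s ∈ Sv, ⟪w Kstar, h_v⟫ ≤ ⟪w s, h_v⟫)
    (hΔ : Δ = ⟪w istar, h_v⟫ - ⟪w Kstar, h_v⟫)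
    (hcos : ⟪h_m, h_v⟫ ≥ c_h ^ 2 * δ)
    (hδ : δ > 1 - (Δ / (2 * c)) ^ 2) :
    (∀ j ∉ Sv, ⟪w j, h_m⟫ ≤ ⟪w istar, h_m⟫) ∧
    (Finset.univ.filter fun j => ⟪w istar, h_m⟫ < ⟪w j, h_m⟫).card ≤ K - 1 ∧
    (∀ T : Finset (Fin V), T.card = K →
      (∀ t ∈ T, ∀ j ∉ T, ⟪w j, h_m⟫ ≤ ⟪w t, h_m⟫) → istar ∈ T) :=
  stmt_4_general d V K h_m h_v w c_h c_w δ c Δ hm hv hw hc istar hargmax Sv hScard hStop histar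
    Kstar hKstar hKmin hΔ hcos hδ
end

section
/- Let f : Fin V → ℝ be a logit vector, i* = argmax f (unique), and suppose g : Fin V → ℝ satisfies |f(r) − g(r)| ≤ ε for all r. If the gap between f(i*) and the K-th largest value of f exceeds 2ε, then at most K − 1 indices j ≠ i* satisfy g(j) > g(i*); hence i* belongs to every top-K set of g. -/
theorem stmt_8 (V K : ℕ) (hK1 : 1 ≤ K) (hKV : K ≤ V)
    (f g : Fin V → ℝ) (ε : ℝ)
    (hfg : ∀ r, |f r - g r| ≤ ε)
    (istar : Fin V) (hargmax : ∀ r, r ≠ istar → f r < f istar)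
    (S : Finset (Fin V)) (hScard : S.card = K)
    (hStop : ∀ s ∈ S, ∀ j ∉ S, f j ≤ f s)
    (Kstar : Fin V) (hKstar : Kstar ∈ S)
    (hKmin : ∀ s ∈ S, f Kstar ≤ f s)
    (hgap : f istar - f Kstar > 2 * ε) :
    (Finset.univ.filter fun j => j ≠ istar ∧ g istar < g j).card ≤ K - 1 ∧
    (∀ T : Finset (Fin V), T.card = K →
      (∀ t ∈ T, ∀ j ∉ T, g j ≤ g t) → istar ∈ T) := by
  have key : ∀ j : Fin V, g istar ≤ g j → j ∈ S.erase Kstar := by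
    intro j hj
    have h1 : f istar - g istar ≤ ε := (abs_le.mp (hfg istar)).2
    have h2 : g j - f j ≤ ε := by
      have := (abs_le.mp (hfg j)).1; linarith
    have hfj : f j > f Kstar := by linarith
    have hjS : j ∈ S := by
      by_contra hjS
      exact absurd (hStop Kstar hKstar j hjS) (not_le.mpr hfj)
    exact Finset.mem_erase.mpr ⟨fun h => by rw [h] at hfj; exact lt_irrefl _ hfj, hjS⟩
  constructor
  · have hsub : (Finset.univ.filter fun j => j ≠ istar ∧ g istar < g j) ⊆ S.erase Kstar := by
      intro j hj
      obtain ⟨_, hlt⟩ := (Finset.mem_filter.mp hj).2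
      exact key j hlt.le
    calc _ ≤ (S.erase Kstar).card := Finset.card_le_card hsub
      _ = K - 1 := by rw [Finset.card_erase_of_mem hKstar, hScard]
  · intro T hTcard hTtop
    by_contra histar
    have hsub : T ⊆ S.erase Kstar := fun t ht => key t (hTtop t ht istar histar)
    have := Finset.card_le_card hsub
    rw [hTcard, Finset.card_erase_of_mem hKstar, hScard] at this
    omega
end
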